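/- arXiv:1510.05460 — 5 statements merged into one kernel-verified Lean document; each statement's English description precedes it below -/
import Mathlib

section
/- Let A and B be positive integers, let L be a nonnegative integer, and let K be an integer such that gcd(A, B) divides K and |K| < L + max(A, B). Then there exist nonnegative integers a and b such that a·A − b·B = −K and L ≤ a·A, L ≤ b·B, a·A ≤ 2L + 2·lcm(A, B), and b·B ≤ 2L + 2·lcm(A, B). -/
/-!
The solutions of `x * A - y * B = c` form one arithmetic progression in which `x * A`
moves in steps of `lcm A B`, so a solution can be chosen with `x * A` in any window
`[M, M + lcm A B)`. Taking `M = max L (L - K)` makes both `a * A` and `b * B = a * A + K`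
at least `L`, and each exceeds `M` by less than `lcm A B`, while `M ≤ L + |K|` and
`|K| < L + max A B ≤ L + lcm A B`.
-/

namespace Int

theorem exists_mul_sub_mul_eq_of_gcd_dvd {A B c : ℤ} (h : (A.gcd B : ℤ) ∣ c) :
    ∃ x y : ℤ, x * A - y * B = c := by
  obtain ⟨m, rfl⟩ := h
  exact ⟨A.gcdA B * m, -(A.gcdB B * m), by rw [Int.gcd_eq_gcd_ab]; ring⟩

theorem exists_mul_sub_mul_eq_and_mul_mem_Ico {A B c : ℤ} (hA : A ≠ 0) (hB : B ≠ 0)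
    (h : (A.gcd B : ℤ) ∣ c) (M : ℤ) :
    ∃ x y : ℤ, x * A - y * B = c ∧ x * A ∈ Set.Ico M (M + A.lcm B) := by
  obtain ⟨x, y, hxy⟩ := exists_mul_sub_mul_eq_of_gcd_dvd h
  obtain ⟨p, hp⟩ := A.dvd_lcm_left B
  obtain ⟨q, hq⟩ := A.dvd_lcm_right B
  have hl : (0 : ℤ) < A.lcm B := mod_cast Int.lcm_pos hA hB
  set t := toIcoDiv hl M (x * A)
  refine ⟨x - t * p, y - t * q, ?_, ?_⟩
  · linear_combination hxy + t * hp - t * hq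
  · convert toIcoMod_mem_Ico hl M (x * A) using 1
    rw [← self_sub_toIcoDiv_zsmul, smul_eq_mul]
    linear_combination t * hp

end Int

theorem Nat.max_le_lcm {A B : ℕ} (hA : 0 < A) (hB : 0 < B) : max A B ≤ Nat.lcm A B :=
  max_le (Nat.le_of_dvd (Nat.lcm_pos hA hB) (Nat.dvd_lcm_left A B))
    (Nat.le_of_dvd (Nat.lcm_pos hA hB) (Nat.dvd_lcm_right A B))

/-- Claim about choosing the numbers of cycle repetitions: for positive `A, B`,
`L ≥ 0` and an integer `K` divisible by `gcd(A,B)` with `|K| < L + max(A,B)`,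
there are nonnegative `a, b` with `aA − bB = −K` and
`L ≤ aA, bB ≤ 2L + 2·lcm(A,B)`. -/
theorem exists_cycle_multiplicities (A B : ℕ) (hA : 0 < A) (hB : 0 < B)
    (L : ℕ) (K : ℤ) (hdvd : (Nat.gcd A B : ℤ) ∣ K)
    (hK : K.natAbs < L + max A B) :
    ∃ a b : ℕ, (a : ℤ) * A - (b : ℤ) * B = -K ∧
      L ≤ a * A ∧ L ≤ b * B ∧
      a * A ≤ 2 * L + 2 * Nat.lcm A B ∧
      b * B ≤ 2 * L + 2 * Nat.lcm A B := by
  obtain ⟨x, y, hxy, hlo, hhi⟩ := Int.exists_mul_sub_mul_eq_and_mul_mem_Ico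
    (A := A) (B := B) (c := -K) (by positivity) (by positivity)
    (by rwa [Int.gcd_natCast_natCast, dvd_neg]) (max (L : ℤ) (L - K))
  rw [Int.lcm_natCast_natCast] at hhi
  have hmax := Nat.max_le_lcm hA hB
  lift x to ℕ using nonneg_of_mul_nonneg_left (by omega) (by positivity : (0 : ℤ) < A)
  lift y to ℕ using nonneg_of_mul_nonneg_left (by omega) (by positivity : (0 : ℤ) < B)
  refine ⟨x, y, hxy, ?_, ?_, ?_, ?_⟩ <;> omega
end

section
/- Let O be a one-counter system with n states, let g be a positive integer, and let σ be a consistent sequence of transitions of O such that no nonempty infix of σ is a cycle whose effect is divisible by g. Then the length of σ is at most g·n. -/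
/-- A one-counter system (OCS). -/
structure OCS (Q : Type*) where
  pos : Set (Q × ℤ × Q)
  zero : Set (Q × ℤ × Q)
  pos_eff : ∀ t ∈ pos, t.2.1 = -1 ∨ t.2.1 = 0 ∨ t.2.1 = 1
  zero_eff : ∀ t ∈ zero, t.2.1 = 0 ∨ t.2.1 = 1

/-- The effect of a sequence of transitions: the sum of its counter increments. -/
def transEff {Q : Type*} (σ : List (Q × ℤ × Q)) : ℤ :=
  (σ.map fun t => t.2.1).sum

/-!
Pigeonhole: attach to each position `p < |σ|` the source state of its transition together
with the effect of the first `p` transitions modulo `g`. There are at most `g · n` such pairs,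
so if `|σ| > g · n` two positions `i < j` share a pair, and the transitions `i, …, j - 1`
form a cycle (by consistency the last one ends where transition `j` starts) whose effect,
the difference of the two prefix effects, is divisible by `g`.
-/

section
variable {Q : Type*}

def ReturnsToStart (τ : List (Q × ℤ × Q)) : Prop :=
  τ.head?.map Prod.fst = τ.getLast?.map (fun t => t.2.2)

theorem transEff_take_add (σ : List (Q × ℤ × Q)) (i k : ℕ) :
    transEff (σ.take (i + k)) = transEff (σ.take i) + transEff ((σ.drop i).take k) := by
  rw [List.take_add]
  simp [transEff]

theorem returnsToStart_drop_take {σ : List (Q × ℤ × Q)}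
    (hcons : σ.IsChain fun s t => s.2.2 = t.1) {i k : ℕ} (hk : 0 < k)
    (hlt : i + k < σ.length) (hsrc : σ[i].1 = σ[i + k].1) :
    ReturnsToStart ((σ.drop i).take k) := by
  have hlast : σ[i + (k - 1)].2.2 = σ[i + k].1 := by
    simpa [show i + (k - 1) + 1 = i + k by omega] using hcons.getElem (i + (k - 1)) (by omega)
  simp [ReturnsToStart, List.head?_take, List.getLast?_take, hk.ne',
    show i < σ.length by omega, show i + (k - 1) < σ.length by omega, hsrc, hlast]

theorem exists_returnsToStart_infix_of_mul_card_lt [Fintype Q] {σ : List (Q × ℤ × Q)}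
    (hcons : σ.IsChain fun s t => s.2.2 = t.1) {g : ℕ} [NeZero g]
    (hlen : g * Fintype.card Q < σ.length) :
    ∃ τ, τ <:+: σ ∧ τ ≠ [] ∧ ReturnsToStart τ ∧ (g : ℤ) ∣ transEff τ := by
  let f : Fin σ.length → Q × ZMod g := fun p => (σ[p].1, transEff (σ.take p))
  have hcard : Fintype.card (Q × ZMod g) < Fintype.card (Fin σ.length) := by
    simpa [mul_comm] using hlen
  obtain ⟨i, j, hij, hfeq⟩ := Fintype.exists_ne_map_eq_of_card_lt f hcard
  wlog hlt : i < j generalizing i j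
  · exact this j i hij.symm hfeq.symm (lt_of_le_of_ne (not_lt.mp hlt) hij.symm)
  rcases i with ⟨i, hi⟩
  rcases j with ⟨j, hj⟩
  obtain ⟨k, rfl⟩ := Nat.exists_eq_add_of_le hlt.le
  have hk : 0 < k := by simpa using hlt
  simp only [f, Prod.mk.injEq, transEff_take_add] at hfeq
  refine ⟨(σ.drop i).take k, ?_, ?_, ?_, ?_⟩
  · exact (List.take_prefix _ _).isInfix.trans (List.drop_suffix _ _).isInfix
  · simp only [ne_eq, List.take_eq_nil_iff, List.drop_eq_nil_iff, not_or, not_le]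
    omega
  · exact returnsToStart_drop_take hcons hk hj hfeq.1
  · simpa using (ZMod.intCast_eq_intCast_iff_dvd_sub _ _ _).mp hfeq.2

end

theorem length_le_of_no_cycle_infix_general {Q : Type*} [Fintype Q]
    (g : ℕ) (hg : 0 < g) (σ : List (Q × ℤ × Q))
    (hcons : σ.Chain' (fun s t => s.2.2 = t.1))
    (hnocyc : ∀ τ : List (Q × ℤ × Q), τ <:+: σ → τ ≠ [] →
      τ.head?.map Prod.fst = τ.getLast?.map (fun t => t.2.2) →
      ¬ ((g : ℤ) ∣ transEff τ)) :
    σ.length ≤ g * Fintype.card Q := by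
  have : NeZero g := ⟨hg.ne'⟩
  by_contra! hlen
  obtain ⟨τ, hinf, hne, hret, hdvd⟩ := exists_returnsToStart_infix_of_mul_card_lt hcons hlen
  exact hnocyc τ hinf hne hret hdvd

/-- If `σ` is a consistent sequence of transitions of a one-counter system `O`
with `n` states and no nonempty infix of `σ` is a cycle (first source state
equals last target state) whose effect is divisible by `g > 0`, then
`σ` has length at most `g · n`. -/
theorem length_le_of_no_cycle_infix {Q : Type*} [Fintype Q] (O : OCS Q)
    (g : ℕ) (hg : 0 < g) (σ : List (Q × ℤ × Q))
    (hmem : ∀ t ∈ σ, t ∈ O.pos ∪ O.zero)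
    (hcons : σ.Chain' (fun s t => s.2.2 = t.1))
    (hnocyc : ∀ τ : List (Q × ℤ × Q), τ <:+: σ → τ ≠ [] →
      τ.head?.map Prod.fst = τ.getLast?.map (fun t => t.2.2) →
      ¬ ((g : ℤ) ∣ transEff τ)) :
    σ.length ≤ g * Fintype.card Q :=
  length_le_of_no_cycle_infix_general g hg σ hcons hnocyc
end

section
/- Let O be a one-counter system with state set Q and let a ∈ ℕ. Then there exists a one-counter system O_a with the same state set Q such that, for all p, q ∈ Q and all K ∈ ℕ: there is a path from (p, 0) to (q, 0) of length exactly K in O_a if and only if there is a path from (p, a) to (q, a) in O which contains exactly K+1 configurations of counter value at least a. -/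
/-- The step relation on configurations `(q, c) ∈ Q × ℕ`. -/
def OCS.Step {Q : Type*} (O : OCS Q) (γ γ' : Q × ℕ) : Prop :=
  (1 ≤ γ.2 ∧ (γ.1, (γ'.2 : ℤ) - (γ.2 : ℤ), γ'.1) ∈ O.pos) ∨
  (γ.2 = 0 ∧ (γ.1, (γ'.2 : ℤ) - (γ.2 : ℤ), γ'.1) ∈ O.zero)

/-- There is a path of length exactly `m` (number of steps) from `α` to `β`. -/
def OCS.PathOfLen {Q : Type*} (O : OCS Q) (m : ℕ) (α β : Q × ℕ) : Prop :=
  ∃ γ : ℕ → Q × ℕ, γ 0 = α ∧ γ m = β ∧ ∀ i < m, O.Step (γ i) (γ (i + 1))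

/-!
Shifting counters down by `a` identifies the configurations of `O` with counter at least `a`
with the configurations of `O_a`. Cut a path of `O` at its configurations with counter `≥ a`:
a piece that starts above `a` is a single step, and a piece that starts at `a` stays below `a`
until it reaches `a` or `a + 1`. If `O_a` copies the transitions of `O` away from zero and turns
every piece of the second kind into a zero test, the pieces of a path of `O` with `K + 1` such
configurations are exactly the `K` steps of a path of `O_a`.
-/

lemma Nat.count_eq_one_iff_of_zero {p : ℕ → Prop} [DecidablePred p] {m : ℕ} (h0 : p 0) :
    Nat.count p m = 1 ↔ 0 < m ∧ ∀ i, 0 < i → i < m → ¬p i := by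
  rcases m with _ | n
  · simp
  rw [Nat.count_succ', if_pos h0, Nat.add_eq_right, Nat.count_iff_forall_not]
  refine ⟨fun h => ⟨n.succ_pos, fun i hi hin => ?_⟩,
    fun ⟨_, h⟩ k hk => h (k + 1) k.succ_pos (by omega)⟩
  obtain ⟨k, rfl⟩ := Nat.exists_eq_add_of_le' hi
  exact h k (by omega)

section Visits

variable {α : Type*} {R : α → α → Prop} {P : α → Prop} [DecidablePred P]

variable (R P) in
/-- A path from `x` to `y` along `R` on which exactly `k` of the positions `0, …, m - 1` satisfy
`P`: the start is counted and the end is not, so that counts add up under concatenation. -/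
def VisitPath (k : ℕ) (x y : α) : Prop :=
  ∃ (m : ℕ) (γ : ℕ → α), γ 0 = x ∧ γ m = y ∧ (∀ i < m, R (γ i) (γ (i + 1))) ∧
    Nat.count (fun i => P (γ i)) m = k

def pathAppend (γ₁ γ₂ : ℕ → α) (m i : ℕ) : α := if i ≤ m then γ₁ i else γ₂ (i - m)

lemma pathAppend_of_le {γ₁ γ₂ : ℕ → α} {m i : ℕ} (h : i ≤ m) : pathAppend γ₁ γ₂ m i = γ₁ i :=
  if_pos h

lemma pathAppend_add {γ₁ γ₂ : ℕ → α} {m : ℕ} (h : γ₁ m = γ₂ 0) (i : ℕ) :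
    pathAppend γ₁ γ₂ m (m + i) = γ₂ i := by
  unfold pathAppend
  split_ifs with hi
  · obtain rfl : i = 0 := by omega
    simpa using h
  · simp

lemma VisitPath.append {k l : ℕ} {x y z : α} (h₁ : VisitPath R P k x y) (h₂ : VisitPath R P l y z) :
    VisitPath R P (k + l) x z := by
  obtain ⟨m, γ₁, rfl, rfl, hstep₁, rfl⟩ := h₁
  obtain ⟨n, γ₂, hjoin, rfl, hstep₂, rfl⟩ := h₂
  refine ⟨m + n, pathAppend γ₁ γ₂ m, pathAppend_of_le (Nat.zero_le _), pathAppend_add hjoin.symm n,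
    fun i hi => ?_, ?_⟩
  · rcases lt_or_ge i m with him | him
    · rw [pathAppend_of_le him.le, pathAppend_of_le him]
      exact hstep₁ i him
    · obtain ⟨j, rfl⟩ := Nat.exists_eq_add_of_le him
      rw [add_assoc, pathAppend_add hjoin.symm, pathAppend_add hjoin.symm]
      exact hstep₂ j (by omega)
  · rw [Nat.count_add]
    simp only [pathAppend_add hjoin.symm]
    congr 1
    simp only [Nat.count_eq_card_filter_range]
    refine congrArg Finset.card (Finset.filter_congr fun i hi => ?_)
    rw [pathAppend_of_le (Finset.mem_range.1 hi).le]

lemma visitPath_zero_iff {x y : α} (hx : P x) : VisitPath R P 0 x y ↔ x = y := by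
  constructor
  · rintro ⟨m, γ, rfl, rfl, -, hcount⟩
    obtain rfl : m = 0 := by
      by_contra hm
      exact Nat.count_iff_forall_not.1 hcount 0 (Nat.pos_of_ne_zero hm) hx
    rfl
  · rintro rfl
    exact ⟨0, fun _ => x, rfl, rfl, by simp, by simp⟩

lemma visitPath_one_iff {x y : α} (hx : P x) :
    VisitPath R P 1 x y ↔ ∃ (m : ℕ) (γ : ℕ → α), 0 < m ∧ γ 0 = x ∧ γ m = y ∧
      (∀ i < m, R (γ i) (γ (i + 1))) ∧ ∀ i, 0 < i → i < m → ¬P (γ i) := by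
  constructor
  · rintro ⟨m, γ, rfl, rfl, hstep, hcount⟩
    obtain ⟨hm, hint⟩ := (Nat.count_eq_one_iff_of_zero hx).1 hcount
    exact ⟨m, γ, hm, rfl, rfl, hstep, hint⟩
  · rintro ⟨m, γ, hm, rfl, rfl, hstep, hint⟩
    exact ⟨m, γ, rfl, rfl, hstep, (Nat.count_eq_one_iff_of_zero hx).2 ⟨hm, hint⟩⟩

lemma visitPath_one_of_rel {x y : α} (hx : P x) (h : R x y) : VisitPath R P 1 x y :=
  (visitPath_one_iff hx).2 ⟨1, fun i => if i = 0 then x else y, one_pos, rfl, rfl,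
    fun i hi => by simpa [Nat.lt_one_iff.1 hi] using h, fun i hi hi1 => by omega⟩

/-- Split a path at its first return to `P`. -/
lemma visitPath_succ_iff {k : ℕ} {x z : α} (hx : P x) (hz : P z) :
    VisitPath R P (k + 1) x z ↔ ∃ y, P y ∧ VisitPath R P 1 x y ∧ VisitPath R P k y z := by
  refine ⟨fun h => ?_, fun ⟨y, _, h₁, h₂⟩ => add_comm k 1 ▸ h₁.append h₂⟩
  obtain ⟨m, γ, rfl, rfl, hstep, hcount⟩ := h
  have hm : 0 < m := by
    by_contra! hm
    simp [Nat.le_zero.1 hm] at hcount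
  have hret : ∃ j, 0 < j ∧ j ≤ m ∧ P (γ j) := ⟨m, hm, le_rfl, hz⟩
  obtain ⟨j, ⟨hj, hjm, hPj⟩, hmin⟩ : ∃ j, (0 < j ∧ j ≤ m ∧ P (γ j)) ∧
      ∀ i < j, ¬(0 < i ∧ i ≤ m ∧ P (γ i)) :=
    ⟨Nat.find hret, Nat.find_spec hret, fun i => Nat.find_min hret⟩
  have hone : Nat.count (fun i => P (γ i)) j = 1 :=
    (Nat.count_eq_one_iff_of_zero hx).2 ⟨hj, fun i hi hij hPi => hmin i hij ⟨hi, by omega, hPi⟩⟩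
  refine ⟨γ j, hPj, ⟨j, γ, rfl, rfl, fun i hi => hstep i (by omega), hone⟩,
    m - j, fun i => γ (j + i), rfl, congrArg γ (by omega),
    fun i hi => by simpa [add_assoc] using hstep (j + i) (by omega), ?_⟩
  rw [show m = j + (m - j) by omega, Nat.count_add] at hcount
  beta_reduce
  omega

end Visits

namespace OCS

variable {Q : Type*}

lemma Step.snd_le_and_snd_le {O : OCS Q} {x y : Q × ℕ} (h : O.Step x y) :
    y.2 ≤ x.2 + 1 ∧ x.2 ≤ y.2 + 1 := by
  rcases h with ⟨-, ht⟩ | ⟨-, ht⟩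
  · rcases O.pos_eff _ ht with h | h | h <;> simp only at h <;> omega
  · rcases O.zero_eff _ ht with h | h <;> simp only at h <;> omega

lemma pathOfLen_zero_iff {O : OCS Q} {x y : Q × ℕ} : O.PathOfLen 0 x y ↔ x = y :=
  ⟨fun ⟨γ, h0, h1, _⟩ => h0 ▸ h1, fun h => ⟨fun _ => x, rfl, h, by simp⟩⟩

lemma pathOfLen_succ_iff {O : OCS Q} {n : ℕ} {x z : Q × ℕ} :
    O.PathOfLen (n + 1) x z ↔ ∃ y, O.Step x y ∧ O.PathOfLen n y z := by
  constructor
  · rintro ⟨γ, rfl, rfl, hstep⟩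
    exact ⟨γ 1, hstep 0 n.succ_pos, fun i => γ (i + 1), rfl, rfl,
      fun i hi => hstep (i + 1) (by omega)⟩
  · rintro ⟨y, hxy, γ, rfl, rfl, hstep⟩
    refine ⟨fun i => if i = 0 then x else γ (i - 1), rfl, by simp, fun i hi => ?_⟩
    rcases i with _ | i
    · simpa using hxy
    · simpa using hstep i (by omega)

def lift (O : OCS Q) (a : ℕ) : OCS Q where
  pos := O.pos
  zero := {t | (t.2.1 = 0 ∨ t.2.1 = 1) ∧
    VisitPath O.Step (fun x => a ≤ x.2) 1 (t.1, a) (t.2.2, t.2.1.toNat + a)}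
  pos_eff := O.pos_eff
  zero_eff _ ht := ht.1

variable {O : OCS Q}

lemma step_or_of_visitPath_one {a : ℕ} {x y : Q × ℕ} (hx : a ≤ x.2)
    (h : VisitPath O.Step (fun x => a ≤ x.2) 1 x y) : O.Step x y ∨ (x.2 = a ∧ y.2 ≤ a) := by
  obtain ⟨m, γ, hm, rfl, rfl, hstep, hbelow⟩ :=
    (visitPath_one_iff (P := fun x : Q × ℕ => a ≤ x.2) hx).1 h
  rcases eq_or_lt_of_le (Nat.one_le_iff_ne_zero.2 hm.ne') with rfl | hm
  · exact Or.inl (hstep 0 one_pos)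
  have hleave := (hstep 0 (by omega)).snd_le_and_snd_le
  have hreturn := (hstep (m - 1) (by omega)).snd_le_and_snd_le
  have hbelow₁ := hbelow 1 one_pos hm
  have hbelow₂ := hbelow (m - 1) (by omega) (by omega)
  rw [Nat.sub_add_cancel hm.le] at hreturn
  simp only [not_le, zero_add] at hbelow₁ hbelow₂ hleave
  omega

lemma lift_step_iff {a c c' : ℕ} {p q : Q} :
    (O.lift a).Step (p, c) (q, c') ↔
      VisitPath O.Step (fun x => a ≤ x.2) 1 (p, c + a) (q, c' + a) := by
  rcases Nat.eq_zero_or_pos c with rfl | hc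
  · simp only [Step, nonpos_iff_eq_zero, one_ne_zero, lift, CharP.cast_eq_zero, sub_zero,
      false_and, Set.mem_ofPred_eq, Int.natCast_eq_zero, Nat.cast_eq_one, Int.toNat_natCast,
      true_and, false_or, zero_add, and_iff_right_iff_imp]
    intro h
    rcases step_or_of_visitPath_one le_rfl h with hs | ⟨-, hle⟩
    · have := hs.snd_le_and_snd_le
      simp only at this
      omega
    · simp only at hle
      omega
  · have hdiff : ((c' + a : ℕ) : ℤ) - ((c + a : ℕ) : ℤ) = (c' : ℤ) - c := by push_cast; ring
    have hlifted : (O.lift a).Step (p, c) (q, c') ↔ O.Step (p, c + a) (q, c' + a) := by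
      simp only [Step, hdiff, lift]
      constructor <;> rintro (⟨-, h⟩ | ⟨h, -⟩) <;> first | exact Or.inl ⟨by omega, h⟩ | omega
    rw [hlifted]
    exact ⟨visitPath_one_of_rel (P := fun x : Q × ℕ => a ≤ x.2) le_add_self,
      fun h => (step_or_of_visitPath_one le_add_self h).resolve_right (by simp; omega)⟩

lemma lift_pathOfLen_iff {a : ℕ} {p q : Q} {c K : ℕ} :
    (O.lift a).PathOfLen K (p, c) (q, 0) ↔
      VisitPath O.Step (fun x => a ≤ x.2) K (p, c + a) (q, a) := by
  induction K generalizing p c with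
  | zero =>
    rw [pathOfLen_zero_iff, visitPath_zero_iff (P := fun x : Q × ℕ => a ≤ x.2) le_add_self]
    simp
  | succ K ih =>
    rw [pathOfLen_succ_iff, visitPath_succ_iff (P := fun x : Q × ℕ => a ≤ x.2) le_add_self le_rfl]
    constructor
    · rintro ⟨⟨p', c'⟩, hstep, hpath⟩
      exact ⟨(p', c' + a), le_add_self, lift_step_iff.1 hstep, ih.1 hpath⟩
    · rintro ⟨⟨p', d⟩, had, hstep, hpath⟩
      obtain ⟨c', rfl⟩ := Nat.exists_eq_add_of_le' had
      exact ⟨(p', c'), lift_step_iff.2 hstep, ih.2 hpath⟩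

end OCS

theorem lifted_system_exists_general {Q : Type*} (O : OCS Q) (a : ℕ) :
    ∃ O' : OCS Q, ∀ (p q : Q) (K : ℕ),
      O'.PathOfLen K (p, 0) (q, 0) ↔
      ∃ (m : ℕ) (γ : ℕ → Q × ℕ), γ 0 = (p, a) ∧ γ m = (q, a) ∧
        (∀ i < m, O.Step (γ i) (γ (i + 1))) ∧
        ((Finset.range (m + 1)).filter (fun i => a ≤ (γ i).2)).card = K + 1 := by
  refine ⟨O.lift a, fun p q K => ?_⟩
  rw [OCS.lift_pathOfLen_iff, zero_add]
  refine exists_congr fun m => exists_congr fun γ => and_congr_right fun _ =>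
    and_congr_right fun hm => and_congr_right fun _ => ?_
  rw [← Nat.count_eq_card_filter_range, Nat.count_succ, if_pos (by simp [hm]), add_left_inj]

/-- For every one-counter system `O` over a state set `Q` and every `a : ℕ`,
there is a one-counter system `O_a` over the same state set such that, for all
states `p, q` and every `K`, there is a path from `(p,0)` to `(q,0)` of length
exactly `K` in `O_a` iff there is a path from `(p,a)` to `(q,a)` in `O`
containing exactly `K+1` configurations of counter value at least `a`. -/
theorem lifted_system_exists {Q : Type*} [Fintype Q] (O : OCS Q) (a : ℕ) :
    ∃ O' : OCS Q, ∀ (p q : Q) (K : ℕ),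
      O'.PathOfLen K (p, 0) (q, 0) ↔
      ∃ (m : ℕ) (γ : ℕ → Q × ℕ), γ 0 = (p, a) ∧ γ m = (q, a) ∧
        (∀ i < m, O.Step (γ i) (γ (i + 1))) ∧
        ((Finset.range (m + 1)).filter (fun i => a ≤ (γ i).2)).card = K + 1 :=
  lifted_system_exists_general O a
end

section
/- For every n ≥ 1 there exists a one-counter system O_1 with exactly 2n states, containing states p_1 and q_1, such that the configuration (q_1, 0) is reachable from (p_1, 0) and every path in O_1 from (p_1, 0) to (q_1, 0) has length at least n². Concretely, O_1 has states p_1, …, p_n, q_1, …, q_n and transitions (p_i, +1, p_{i+1}) and (q_i, 0, q_{i+1}) for 1 ≤ i < n, together with (q_n, −1, q_1) and (p_n, 0, q_1), all non-zero transitions except (p_1, +1, p_2), which is a zero test; the unique path from (p_1, 0) to (q_1, 0) has length exactly n². -/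
/-!
With states numbered from `0`, the function `Φ(pᵢ, c) = n·c - i + n·(n - i)`, `Φ(qᵢ, c) = n·c - i`
drops by exactly one along every transition, and `Φ(p₀, 0) = n²`, `Φ(q₀, 0) = 0`, so every path
from `(p₀, 0)` to `(q₀, 0)` has at least `n²` steps. A path of exactly that length climbs through
`p₀, …, pₙ₋₁` to counter `n - 1`, switches to `q₀`, and then runs `n - 1` rounds through
`q₀, …, qₙ₋₁`, each lowering the counter by one.
-/

namespace OCS

variable {Q : Type*} {O : OCS Q}

theorem step_of_mem_pos {s s' : Q} {c c' : ℕ} {d : ℤ} (hc : 1 ≤ c) (ht : (s, d, s') ∈ O.pos)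
    (hd : (c' : ℤ) = c + d) : O.Step (s, c) (s', c') :=
  .inl ⟨hc, by rwa [hd, add_sub_cancel_left]⟩

theorem step_of_mem_zero {s s' : Q} {c' : ℕ} {d : ℤ} (ht : (s, d, s') ∈ O.zero)
    (hd : (c' : ℤ) = d) : O.Step (s, 0) (s', c') :=
  .inr ⟨rfl, by rwa [hd, Nat.cast_zero, sub_zero]⟩

namespace PathOfLen

theorem refl (α : Q × ℕ) : O.PathOfLen 0 α α :=
  ⟨fun _ => α, rfl, rfl, by simp⟩

theorem tail {m : ℕ} {α β δ : Q × ℕ} (h : O.PathOfLen m α β) (hs : O.Step β δ) :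
    O.PathOfLen (m + 1) α δ := by
  obtain ⟨γ, h0, hm, hγ⟩ := h
  refine ⟨fun i => if i ≤ m then γ i else δ, by simpa, by simp, fun i hi => ?_⟩
  rcases Nat.lt_or_eq_of_le (Nat.lt_succ_iff.mp hi) with hi | rfl
  · simpa [hi.le, Nat.succ_le_of_lt hi] using hγ i hi
  · simpa [hm] using hs

theorem trans {a b : ℕ} {α β δ : Q × ℕ} (h₁ : O.PathOfLen a α β) (h₂ : O.PathOfLen b β δ) :
    O.PathOfLen (a + b) α δ := by
  induction b generalizing δ with
  | zero => obtain ⟨γ, h0, hb, -⟩ := h₂; rwa [← hb, h0]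
  | succ b ih =>
    obtain ⟨γ, h0, hb, hγ⟩ := h₂
    exact (ih ⟨γ, h0, rfl, fun i hi => hγ i (by omega)⟩).tail (hb ▸ hγ b b.lt_succ_self)

theorem potential_le {m : ℕ} {α β : Q × ℕ} (Φ : Q × ℕ → ℤ)
    (hΦ : ∀ γ γ', O.Step γ γ' → Φ γ ≤ Φ γ' + 1) (h : O.PathOfLen m α β) : Φ α ≤ Φ β + m := by
  obtain ⟨γ, rfl, rfl, hγ⟩ := h
  suffices ∀ i ≤ m, Φ (γ 0) ≤ Φ (γ i) + i from this m le_rfl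
  intro i
  induction i with
  | zero => simp
  | succ i ih =>
    intro hi
    have := hΦ _ _ (hγ i hi)
    push_cast
    linarith [ih (Nat.le_of_succ_le hi)]

end PathOfLen

end OCS

namespace SquareOCS

/-- `pᵢ` is `.inl (i - 1)` and `qᵢ` is `.inr (i - 1)`. -/
abbrev State (n : ℕ) : Type := Fin n ⊕ Fin n

inductive PosTrans (n : ℕ) : State n × ℤ × State n → Prop
  | incr (i : ℕ) (hi : 1 ≤ i) (h : i + 1 < n) :
      PosTrans n (.inl ⟨i, by omega⟩, 1, .inl ⟨i + 1, h⟩)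
  | switch (h : 0 < n) : PosTrans n (.inl ⟨n - 1, by omega⟩, 0, .inr ⟨0, h⟩)
  | next (i : ℕ) (h : i + 1 < n) : PosTrans n (.inr ⟨i, by omega⟩, 0, .inr ⟨i + 1, h⟩)
  | decr (h : 0 < n) : PosTrans n (.inr ⟨n - 1, by omega⟩, -1, .inr ⟨0, h⟩)

/-- The switch `(pₙ, 0, q₁)` is also a zero test: for `n = 1` the run is at `pₙ = p₁` with
counter `0`. -/
inductive ZeroTrans (n : ℕ) : State n × ℤ × State n → Prop
  | incr (h : 1 < n) : ZeroTrans n (.inl ⟨0, by omega⟩, 1, .inl ⟨1, h⟩)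
  | switch (h : 0 < n) : ZeroTrans n (.inl ⟨n - 1, by omega⟩, 0, .inr ⟨0, h⟩)

def system (n : ℕ) : OCS (State n) where
  pos := {t | PosTrans n t}
  zero := {t | ZeroTrans n t}
  pos_eff := by rintro _ (_ | _ | _ | _) <;> simp
  zero_eff := by rintro _ (_ | _) <;> simp

def potential (n : ℕ) : State n × ℕ → ℤ
  | (.inl i, c) => n * c - i + n * (n - i)
  | (.inr i, c) => n * c - i

theorem potential_step {n : ℕ} {γ γ' : State n × ℕ} (hs : (system n).Step γ γ') :
    potential n γ = potential n γ' + 1 := by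
  obtain ⟨⟨s, c⟩, ⟨s', c'⟩⟩ := γ, γ'
  have key : ∀ d : ℤ, PosTrans n (s, d, s') ∨ ZeroTrans n (s, d, s') → (c' : ℤ) = c + d →
      potential n (s, c) = potential n (s', c') + 1 := by
    rintro d ((_ | hn | _ | hn) | (_ | hn)) hd <;> simp only [potential, hd]
    all_goals first | push_cast [Nat.cast_pred ‹0 < n›]; ring | push_cast; ring
  rcases hs with ⟨-, ht⟩ | ⟨-, ht⟩
  · exact key _ (.inl ht) (by simp)
  · exact key _ (.inr ht) (by simp)

variable {n : ℕ}

theorem pathOfLen_climb (k : ℕ) (hk : k < n) :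
    (system n).PathOfLen k (.inl ⟨0, by omega⟩, 0) (.inl ⟨k, hk⟩, k) := by
  induction k with
  | zero => exact .refl _
  | succ k ih =>
    refine (ih (by omega)).tail ?_
    rcases Nat.eq_zero_or_pos k with rfl | hk₀
    · exact OCS.step_of_mem_zero (ZeroTrans.incr hk) (by simp)
    · exact OCS.step_of_mem_pos hk₀ (PosTrans.incr k hk₀ hk) (by push_cast; ring)

theorem pathOfLen_switch (hn : 0 < n) :
    (system n).PathOfLen n (.inl ⟨0, hn⟩, 0) (.inr ⟨0, hn⟩, n - 1) := by
  obtain ⟨k, rfl⟩ := Nat.exists_eq_add_one_of_ne_zero hn.ne'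
  refine (pathOfLen_climb k k.lt_succ_self).tail ?_
  rcases Nat.eq_zero_or_pos k with rfl | hk
  · exact OCS.step_of_mem_zero (ZeroTrans.switch hn) (by simp)
  · exact OCS.step_of_mem_pos hk (PosTrans.switch hn) (by simp)

theorem pathOfLen_round (hn : 0 < n) (c : ℕ) :
    (system n).PathOfLen n (.inr ⟨0, hn⟩, c + 1) (.inr ⟨0, hn⟩, c) := by
  have walk : ∀ r (hr : r < n),
      (system n).PathOfLen r (.inr ⟨0, hn⟩, c + 1) (.inr ⟨r, hr⟩, c + 1) := by
    intro r hr
    induction r with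
    | zero => exact .refl _
    | succ r ih =>
      exact (ih (by omega)).tail (OCS.step_of_mem_pos (by omega) (PosTrans.next r hr) (by simp))
  obtain ⟨k, rfl⟩ := Nat.exists_eq_add_one_of_ne_zero hn.ne'
  exact (walk k k.lt_succ_self).tail
    (OCS.step_of_mem_pos (by omega) (PosTrans.decr hn) (by push_cast; ring))

theorem pathOfLen_drain (hn : 0 < n) (c : ℕ) :
    (system n).PathOfLen (n * c) (.inr ⟨0, hn⟩, c) (.inr ⟨0, hn⟩, 0) := by
  induction c with
  | zero => exact .refl _
  | succ c ih => exact (by ring : n + n * c = n * (c + 1)) ▸ (pathOfLen_round hn c).trans ih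

theorem pathOfLen_sq (hn : 0 < n) :
    (system n).PathOfLen (n ^ 2) (.inl ⟨0, hn⟩, 0) (.inr ⟨0, hn⟩, 0) := by
  have hlen : n + n * (n - 1) = n ^ 2 := by
    rw [Nat.mul_sub_one, ← Nat.add_sub_assoc (Nat.le_mul_self n), Nat.add_sub_cancel_left, sq]
  exact hlen ▸ (pathOfLen_switch hn).trans (pathOfLen_drain hn (n - 1))

theorem sq_le_of_pathOfLen (hn : 0 < n) {m : ℕ}
    (h : (system n).PathOfLen m (.inl ⟨0, hn⟩, 0) (.inr ⟨0, hn⟩, 0)) : n ^ 2 ≤ m := by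
  have : (n : ℤ) ^ 2 ≤ m := by
    simpa [potential, sq] using h.potential_le (potential n) fun _ _ hs => (potential_step hs).le
  exact_mod_cast this

end SquareOCS

/-- For every `n ≥ 1` there is a one-counter system with exactly `2n` states
and states `p₁, q₁` such that `(q₁, 0)` is reachable from `(p₁, 0)` — indeed
by a path of length exactly `n²` — and every path from `(p₁, 0)` to `(q₁, 0)`
has length at least `n²`. -/
theorem lower_bound_low_counter_example (n : ℕ) (hn : 1 ≤ n) :
    ∃ (Q : Type) (_ : Fintype Q) (O : OCS Q) (p₁ q₁ : Q),
      Fintype.card Q = 2 * n ∧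
      O.PathOfLen (n ^ 2) (p₁, 0) (q₁, 0) ∧
      ∀ m : ℕ, O.PathOfLen m (p₁, 0) (q₁, 0) → n ^ 2 ≤ m :=
  ⟨SquareOCS.State n, inferInstance, SquareOCS.system n, .inl ⟨0, hn⟩, .inr ⟨0, hn⟩,
    by simp [two_mul], SquareOCS.pathOfLen_sq hn, fun _ => SquareOCS.sq_le_of_pathOfLen hn⟩
end

section
/- Let n be a positive integer and let A be a nondeterministic one-counter automaton with m states over the alphabet {a} whose language is exactly the singleton {aⁿ}. Then 14·m² ≥ n; in particular m ≥ √(n/14), so any nondeterministic one-counter automaton accepting exactly {aⁿ} has at least Ω(√n) states. -/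
/-- A nondeterministic one-counter automaton over alphabet `A`. -/
structure OCA (Q : Type*) (A : Type*) extends OCS Q where
  lab : Q × ℤ × Q → Option A
  init : Set Q
  final : Set Q

/-- The automaton accepts `w` if `w` is the label of some path from an initial
configuration `(q₀, 0)`, `q₀ ∈ I`, to a configuration whose state is final. -/
def OCA.Accepts {Q A : Type*} (M : OCA Q A) (w : List A) : Prop :=
  ∃ (m : ℕ) (γ : ℕ → Q × ℕ),
    (γ 0).1 ∈ M.init ∧ (γ 0).2 = 0 ∧ (γ m).1 ∈ M.final ∧
    (∀ i < m, M.toOCS.Step (γ i) (γ (i + 1))) ∧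
    (List.range m).filterMap
      (fun i => M.lab ((γ i).1, ((γ (i + 1)).2 : ℤ) - ((γ i).2 : ℤ), (γ (i + 1)).1)) = w

/-!
Fix a shortest accepting run of an automaton with `m` states recognising `{aⁿ}`. Its
configurations are pairwise distinct, and every accepting path reads exactly `n` letters, so no
loop of the run that reads a letter can be pumped. Count the letter-reading steps of the run:

* at most `m (m + 1)` of them start at counter `≤ m`, as their configurations are distinct;
* after the last visit to zero, two of them in the same state would enclose a loop that can be
  repeated or cut out (lifting the rest of the run), so there are at most `m`;
* the remaining ones, at counter `> m` inside an excursion above zero, are determined by their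
  state and the state at the start of their excursion: a loop between two of them is balanced by a
  loop of opposite direction, found by pigeonhole on the `m + 1` lowest levels on the other side of
  the excursion, and pumping both keeps the run accepting. There are at most `m²` of these.

Hence `n ≤ 2m(m + 1) ≤ 14m²`.
-/

theorem Set.injOn_of_lt_imp_ne {α β : Type*} [LinearOrder α] {f : α → β} {s : Set α}
    (h : ∀ a ∈ s, ∀ b ∈ s, a < b → f a ≠ f b) : s.InjOn f := fun a ha b hb hab => by
  by_contra hne
  rcases lt_or_gt_of_ne hne with hlt | hlt
  · exact h a ha b hb hlt hab
  · exact h b hb a ha hlt hab.symm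

section Descent

variable (c : ℕ → ℕ) {s t v : ℕ}

theorem apply_findGreatest_eq_of_descent (hst : s ≤ t)
    (hc : ∀ i, s ≤ i → i < t → c i ≤ c (i + 1) + 1) (hvt : c t < v) (hvs : v ≤ c s) :
    s ≤ Nat.findGreatest (v ≤ c ·) t ∧ Nat.findGreatest (v ≤ c ·) t < t ∧
      c (Nat.findGreatest (v ≤ c ·) t) = v := by
  have hs : s ≤ Nat.findGreatest (v ≤ c ·) t := Nat.le_findGreatest hst hvs
  have hge : v ≤ c (Nat.findGreatest (v ≤ c ·) t) := Nat.findGreatest_spec (P := (v ≤ c ·)) hst hvs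
  have hlt : Nat.findGreatest (v ≤ c ·) t < t :=
    lt_of_le_of_ne (Nat.findGreatest_le t) fun h => by rw [h] at hge; omega
  have hnext : ¬ v ≤ c (Nat.findGreatest (v ≤ c ·) t + 1) :=
    Nat.findGreatest_is_greatest (P := (v ≤ c ·)) (Nat.lt_succ_self _) hlt
  have := hc _ hs hlt
  exact ⟨hs, hlt, by omega⟩

/-- Pigeonhole on the last visits of the `card α + 1` levels crossed by the descent. -/
theorem exists_map_eq_of_descent {α : Type*} [Fintype α] (g : ℕ → α) (hst : s ≤ t)
    (hc : ∀ i, s ≤ i → i < t → c i ≤ c (i + 1) + 1) (hlev : c t + Fintype.card α < c s) :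
    ∃ i j, s ≤ i ∧ i < j ∧ j ≤ t ∧ g i = g j ∧ c t < c j ∧ c j < c i := by
  have hcard : (Finset.univ : Finset α).card < (Finset.Ioc (c t) (c s)).card := by
    rw [Nat.card_Ioc, Finset.card_univ]; omega
  obtain ⟨v, hv, w, hw, hne, hg⟩ := Finset.exists_ne_map_eq_of_card_lt_of_maps_to hcard
    (f := fun v => g (Nat.findGreatest (v ≤ c ·) t))
    fun _ _ => Finset.mem_coe.mpr (Finset.mem_univ _)
  wlog hvw : v < w generalizing v w
  · exact this w hw v hv hne.symm hg.symm (lt_of_le_of_ne (not_lt.mp hvw) hne.symm)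
  obtain ⟨hv₁, hv₂⟩ := Finset.mem_Ioc.mp hv
  obtain ⟨hw₁, hw₂⟩ := Finset.mem_Ioc.mp hw
  obtain ⟨-, hvt, hcv⟩ := apply_findGreatest_eq_of_descent c hst hc hv₁ hv₂
  obtain ⟨hsw, hwt, hcw⟩ := apply_findGreatest_eq_of_descent c hst hc hw₁ hw₂
  have hwv : Nat.findGreatest (w ≤ c ·) t ≤ Nat.findGreatest (v ≤ c ·) t :=
    Nat.le_findGreatest hwt.le (by omega)
  refine ⟨_, _, hsw, lt_of_le_of_ne hwv fun h => ?_, hvt.le, hg.symm, by omega, by omega⟩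
  rw [h] at hcw; omega

theorem exists_map_eq_of_ascent {α : Type*} [Fintype α] (g : ℕ → α) (hst : s ≤ t)
    (hc : ∀ i, s ≤ i → i < t → c (i + 1) ≤ c i + 1) (hlev : c s + Fintype.card α < c t) :
    ∃ i j, s ≤ i ∧ i < j ∧ j ≤ t ∧ g i = g j ∧ c s < c i ∧ c i < c j := by
  have hrev : ∀ i, s ≤ i → i < t → c (s + t - i) ≤ c (s + t - (i + 1)) + 1 := by
    intro i hsi hit
    have := hc (s + t - (i + 1)) (by omega) (by omega)
    rwa [show s + t - (i + 1) + 1 = s + t - i by omega] at this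
  obtain ⟨i, j, hsi, hij, hjt, hg, hcj, hci⟩ := exists_map_eq_of_descent
    (fun i => c (s + t - i)) (fun i => g (s + t - i)) hst hrev (by simpa using hlev)
  refine ⟨s + t - j, s + t - i, by omega, by omega, by omega, hg.symm, ?_, hci⟩
  simpa using hcj

end Descent

namespace OCS

variable {Q : Type*} {O : OCS Q} {x y : Q × ℕ}

def raise (s : ℕ) (x : Q × ℕ) : Q × ℕ := (x.1, x.2 + s)

@[simp] theorem raise_fst (s : ℕ) (x : Q × ℕ) : (raise s x).1 = x.1 := rfl

@[simp] theorem raise_snd (s : ℕ) (x : Q × ℕ) : (raise s x).2 = x.2 + s := rfl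

@[simp] theorem raise_zero (x : Q × ℕ) : raise 0 x = x := rfl

theorem raise_raise (s t : ℕ) (x : Q × ℕ) : raise s (raise t x) = raise (t + s) x := by
  simp [raise, add_assoc]

theorem eq_raise_of_le (hq : x.1 = y.1) (hc : x.2 ≤ y.2) : y = raise (y.2 - x.2) x :=
  Prod.ext hq.symm (by simp; omega)

theorem raise_sub_raise (s : ℕ) (x y : Q × ℕ) :
    ((raise s y).2 : ℤ) - (raise s x).2 = (y.2 : ℤ) - x.2 := by
  push_cast [raise_snd]; ring

theorem Step.raised (h : O.Step x y) (hx : 1 ≤ x.2) (s : ℕ) : O.Step (raise s x) (raise s y) := by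
  rcases h with ⟨-, h⟩ | ⟨h0, -⟩
  · exact .inl ⟨by simp; omega, by rwa [raise_sub_raise]⟩
  · omega

theorem Step.snd_le_add_one (h : O.Step x y) : y.2 ≤ x.2 + 1 := by
  rcases h with ⟨-, h⟩ | ⟨-, h⟩
  · have := O.pos_eff _ h; simp only at this; omega
  · have := O.zero_eff _ h; simp only at this; omega

theorem Step.le_snd_add_one (h : O.Step x y) : x.2 ≤ y.2 + 1 := by
  rcases h with ⟨-, h⟩ | ⟨-, h⟩
  · have := O.pos_eff _ h; simp only at this; omega
  · have := O.zero_eff _ h; simp only at this; omega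

end OCS

open OCS Finset

namespace OCA

section Paths

variable {Q A : Type*} (M : OCA Q A)

def letters (x y : Q × ℕ) : ℕ :=
  if (M.lab (x.1, (y.2 : ℤ) - x.2, y.1)).isSome then 1 else 0

theorem letters_le_one (x y : Q × ℕ) : M.letters x y ≤ 1 := by
  unfold letters; split <;> omega

theorem letters_raise (s : ℕ) (x y : Q × ℕ) :
    M.letters (raise s x) (raise s y) = M.letters x y := by
  simp only [letters, raise_sub_raise, raise_fst]

inductive Path (b : ℕ) : Q × ℕ → Q × ℕ → ℕ → Prop
  | refl (x : Q × ℕ) : Path b x x 0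
  | tail {x y z : Q × ℕ} {k : ℕ} :
      Path b x y k → b ≤ y.2 → M.Step y z → Path b x z (k + M.letters y z)

variable {M} {b : ℕ} {x y z x' y' : Q × ℕ} {k l k' : ℕ}

theorem Path.trans (h₁ : M.Path b x y k) (h₂ : M.Path b y z l) : M.Path b x z (k + l) := by
  induction h₂ with
  | refl => simpa
  | tail _ hb hs ih => rw [← add_assoc]; exact ih.tail hb hs

theorem Path.mono {b' : ℕ} (hb : b' ≤ b) (h : M.Path b x y k) : M.Path b' x y k := by
  induction h with
  | refl => exact .refl _
  | tail _ hy hs ih => exact ih.tail (hb.trans hy) hs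

theorem Path.cast (h : M.Path b x y k) (hx : x = x') (hy : y = y') (hk : k = k') :
    M.Path b x' y' k' := by
  subst hx hy hk; exact h

theorem Path.raised (hb : 1 ≤ b) (h : M.Path b x y k) (s : ℕ) :
    M.Path b (raise s x) (raise s y) k := by
  induction h with
  | refl => exact .refl _
  | @tail y z _ _ hy hs ih =>
    rw [← M.letters_raise s y z]
    exact ih.tail (by simp; omega) (hs.raised (by omega) s)

theorem Path.pump_up {δ : ℕ} (h : M.Path 1 x (raise δ x) k) (j : ℕ) :
    M.Path 1 x (raise (j * δ) x) (j * k) := by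
  induction j with
  | zero => simpa using Path.refl x
  | succ j ih =>
    exact (ih.trans (h.raised le_rfl (j * δ))).cast rfl
      (by rw [raise_raise]; congr 1; ring) (by ring)

theorem Path.pump_down {δ : ℕ} (h : M.Path 1 (raise δ x) x k) (j : ℕ) :
    M.Path 1 (raise (j * δ) x) x (j * k) := by
  induction j with
  | zero => simpa using Path.refl x
  | succ j ih =>
    exact ((h.raised le_rfl (j * δ)).trans ih).cast
      (by rw [raise_raise]; congr 1; ring) rfl (by ring)

/-- Running a rising loop `d` more times and a falling loop `δ` more times keeps the counter
balanced, so the path still ends at `y`. -/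
theorem Path.pump_balanced {δ d B C D : ℕ} (hB : M.Path 1 x (raise δ x) B)
    (hC : M.Path 1 (raise δ x) (raise d y) C) (hD : M.Path 1 (raise d y) y D) :
    M.Path 1 x y (B + C + D + (d * B + δ * D)) := by
  have hC' : M.Path 1 (raise ((d + 1) * δ) x) (raise ((δ + 1) * d) y) C :=
    (hC.raised le_rfl (d * δ)).cast (by rw [raise_raise]; congr 1; ring)
      (by rw [raise_raise]; congr 1; ring) rfl
  exact (((hB.pump_up (d + 1)).trans hC').trans (hD.pump_down (δ + 1))).cast rfl rfl (by ring)

end Paths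

section Runs

variable {Q A : Type*} (M : OCA Q A)

structure IsAcceptingRun (γ : ℕ → Q × ℕ) (L : ℕ) : Prop where
  init : (γ 0).1 ∈ M.init
  zero : (γ 0).2 = 0
  final : (γ L).1 ∈ M.final
  step : ∀ i < L, M.Step (γ i) (γ (i + 1))

def word (γ : ℕ → Q × ℕ) (L : ℕ) : List A :=
  (List.range L).filterMap
    (fun i => M.lab ((γ i).1, ((γ (i + 1)).2 : ℤ) - ((γ i).2 : ℤ), (γ (i + 1)).1))

theorem accepts_iff {w : List A} :
    M.Accepts w ↔ ∃ L γ, M.IsAcceptingRun γ L ∧ M.word γ L = w :=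
  ⟨fun ⟨L, γ, h0, h0', hL, hs, hw⟩ => ⟨L, γ, ⟨h0, h0', hL, hs⟩, hw⟩,
    fun ⟨L, γ, ⟨h0, h0', hL, hs⟩, hw⟩ => ⟨L, γ, h0, h0', hL, hs, hw⟩⟩

def runLetters (γ : ℕ → Q × ℕ) (i j : ℕ) : ℕ :=
  ∑ t ∈ Ico i j, M.letters (γ t) (γ (t + 1))

def PathsRead (x : Q × ℕ) (q : Q) (n : ℕ) : Prop :=
  ∀ y k, M.Path 0 x y k → y.1 = q → k = n

variable {M} {γ : ℕ → Q × ℕ} {b i j k L : ℕ} {x y : Q × ℕ}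

theorem runLetters_succ (hij : i ≤ j) :
    M.runLetters γ i (j + 1) = M.runLetters γ i j + M.letters (γ j) (γ (j + 1)) :=
  sum_Ico_succ_top hij _

theorem runLetters_ne_zero (hij : i < j) (hi : M.letters (γ i) (γ (i + 1)) ≠ 0) :
    M.runLetters γ i j ≠ 0 := fun h =>
  hi (sum_eq_zero_iff.mp h i (mem_Ico.mpr ⟨le_rfl, hij⟩))

theorem runLetters_le_card (M : OCA Q A) (γ : ℕ → Q × ℕ) (L : ℕ) :
    M.runLetters γ 0 L ≤ #{e ∈ range L | M.letters (γ e) (γ (e + 1)) ≠ 0} := by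
  rw [runLetters, ← range_eq_Ico, ← sum_filter_ne_zero, card_eq_sum_ones]
  exact sum_le_sum fun e _ => M.letters_le_one _ _

theorem length_word (L : ℕ) : (M.word γ L).length = M.runLetters γ 0 L := by
  induction L with
  | zero => rfl
  | succ L ih =>
    rw [runLetters_succ L.zero_le, ← ih, word, word, List.range_succ, List.filterMap_append,
      List.length_append, letters]
    congr 1
    simp only [List.filterMap_cons, List.filterMap_nil]
    split <;> simp_all

theorem path_of_run (hstep : ∀ t < L, M.Step (γ t) (γ (t + 1))) (hij : i ≤ j) (hjL : j ≤ L)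
    (hpos : ∀ t ∈ Set.Ico i j, b ≤ (γ t).2) : M.Path b (γ i) (γ j) (M.runLetters γ i j) := by
  induction j, hij using Nat.le_induction with
  | base => simpa [runLetters] using Path.refl (γ i)
  | succ j hij ih =>
    rw [runLetters_succ hij]
    exact (ih (by omega) fun t ht => hpos t ⟨ht.1, by have := ht.2; omega⟩).tail
      (hpos j ⟨hij, by omega⟩) (hstep j (by omega))

theorem Path.exists_run (h : M.Path b x y k) :
    ∃ L γ, γ 0 = x ∧ γ L = y ∧ (∀ t < L, M.Step (γ t) (γ (t + 1))) ∧
      M.runLetters γ 0 L = k := by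
  induction h with
  | refl => exact ⟨0, fun _ => x, rfl, rfl, by simp, rfl⟩
  | @tail y z _ _ _ hs ih =>
    obtain ⟨L, γ, h0, hL, hstep, hk⟩ := ih
    refine ⟨L + 1, fun t => if t ≤ L then γ t else z, by simpa, by simp, fun t ht => ?_, ?_⟩
    · rcases Nat.lt_or_ge t L with htL | htL
      · simpa [htL.le, Nat.succ_le_of_lt htL] using hstep t htL
      · obtain rfl : t = L := by omega
        simpa [hL] using hs
    · rw [runLetters_succ L.zero_le, ← hk]
      simp only [le_refl, ite_true, Nat.not_succ_le_self, ite_false, hL]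
      congr 1
      refine sum_congr rfl fun t ht => ?_
      have := (mem_Ico.mp ht).2
      simp [this.le, Nat.succ_le_of_lt this]

theorem Path.accepts {M : OCA Q Unit} (h : M.Path b x y k) (hx : x.1 ∈ M.init) (hx0 : x.2 = 0)
    (hy : y.1 ∈ M.final) : M.Accepts (List.replicate k ()) := by
  obtain ⟨L, γ, rfl, rfl, hstep, hk⟩ := h.exists_run
  exact M.accepts_iff.mpr ⟨L, γ, ⟨hx, hx0, hy, hstep⟩,
    List.eq_replicate_iff.mpr ⟨(length_word L).trans hk, fun _ _ => rfl⟩⟩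

theorem IsAcceptingRun.cut (h : M.IsAcceptingRun γ L) (hij : i < j) (hjL : j ≤ L)
    (heq : γ i = γ j) :
    M.IsAcceptingRun (fun t => if t ≤ i then γ t else γ (t + (j - i))) (L - (j - i)) where
  init := by simpa using h.init
  zero := by simpa using h.zero
  final := by
    split_ifs with hL
    · rw [show L - (j - i) = i by omega, heq, show j = L by omega]; exact h.final
    · rw [show L - (j - i) + (j - i) = L by omega]; exact h.final
  step t ht := by
    rcases lt_trichotomy t i with hti | rfl | hti
    · simpa [hti.le, Nat.succ_le_of_lt hti] using h.step t (by omega)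
    · simpa [heq, show t + 1 + (j - t) = j + 1 by omega] using h.step j (by omega)
    · simpa [hti.not_ge, show ¬ t + 1 ≤ i by omega,
        show t + 1 + (j - i) = t + (j - i) + 1 by omega] using h.step (t + (j - i)) (by omega)

theorem exists_run_injOn {w : List A} (h : M.Accepts w) :
    ∃ L γ, M.IsAcceptingRun γ L ∧ Set.InjOn γ (Set.Iic L) := by
  classical
  have hex : ∃ L γ, M.IsAcceptingRun γ L := by
    obtain ⟨L, γ, hγ, -⟩ := M.accepts_iff.mp h
    exact ⟨L, γ, hγ⟩
  obtain ⟨γ, hγ⟩ := Nat.find_spec hex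
  refine ⟨_, γ, hγ, Set.injOn_of_lt_imp_ne fun i _ j (hj : j ≤ _) hij heq => ?_⟩
  exact Nat.find_min hex (show Nat.find hex - (j - i) < Nat.find hex by omega)
    ⟨_, hγ.cut hij hj heq⟩

end Runs

section Pumping

variable {Q A : Type*} {M : OCA Q A} {γ : ℕ → Q × ℕ} {L n : ℕ}

/-- A loop between equal states of a part of the run that stays positive up to its end can be run
twice or skipped, lifting the rest of the run accordingly. -/
theorem runLetters_eq_zero_of_pos_suffix (hstep : ∀ t < L, M.Step (γ t) (γ (t + 1)))
    (hcost : M.PathsRead (γ 0) (γ L).1 n) {p q : ℕ} (hpq : p ≤ q) (hqL : q ≤ L)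
    (hpos : ∀ t ∈ Set.Ico p L, 1 ≤ (γ t).2) (hstate : (γ p).1 = (γ q).1) :
    M.runLetters γ p q = 0 := by
  have hA := path_of_run (b := 0) hstep (Nat.zero_le p) (hpq.trans hqL) fun _ _ => Nat.zero_le _
  have hB := path_of_run hstep hpq hqL fun t ht => hpos t ⟨ht.1, ht.2.trans_le hqL⟩
  have hC := path_of_run hstep hqL le_rfl fun t ht => hpos t ⟨hpq.trans ht.1, ht.2⟩
  have hrun := hcost _ _ (hA.trans ((hB.trans hC).mono zero_le_one)) rfl
  rcases le_total (γ q).2 (γ p).2 with hle | hle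
  · have hC' := (hC.raised le_rfl ((γ p).2 - (γ q).2)).cast
      (eq_raise_of_le hstate.symm hle).symm rfl rfl
    have := hcost _ _ (hA.trans (hC'.mono zero_le_one)) rfl
    omega
  · have hq := eq_raise_of_le hstate hle
    have hB' := (hB.raised le_rfl ((γ q).2 - (γ p).2)).cast hq.symm rfl rfl
    have hC' := hC.raised le_rfl ((γ q).2 - (γ p).2)
    have := hcost _ _ (hA.trans ((hB.trans (hB'.trans hC')).mono zero_le_one)) rfl
    omega

theorem pump_runLetters_eq_zero (hstep : ∀ t < L, M.Step (γ t) (γ (t + 1)))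
    (hcost : M.PathsRead (γ 0) (γ L).1 n) {p q r s : ℕ} (hpq : p ≤ q) (hqr : q ≤ r)
    (hrs : r ≤ s) (hsL : s ≤ L) (hpos : ∀ t ∈ Set.Ico p s, 1 ≤ (γ t).2)
    (hup : (γ p).1 = (γ q).1) (hupc : (γ p).2 ≤ (γ q).2)
    (hdown : (γ s).1 = (γ r).1) (hdownc : (γ s).2 ≤ (γ r).2) :
    ((γ r).2 - (γ s).2) * M.runLetters γ p q + ((γ q).2 - (γ p).2) * M.runLetters γ r s = 0 := by
  have hA := path_of_run (b := 0) hstep (Nat.zero_le p) (by omega) fun _ _ => Nat.zero_le _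
  have hB := path_of_run hstep hpq (by omega) fun t ht => hpos t ⟨ht.1, by have := ht.2; omega⟩
  have hC := path_of_run hstep hqr (by omega) fun t ht =>
    hpos t ⟨by have := ht.1; omega, by have := ht.2; omega⟩
  have hD := path_of_run hstep hrs hsL fun t ht => hpos t ⟨by have := ht.1; omega, ht.2⟩
  have hE := path_of_run (b := 0) hstep hsL le_rfl fun _ _ => Nat.zero_le _
  have hq := eq_raise_of_le hup hupc
  have hr := eq_raise_of_le hdown hdownc
  have hpump := Path.pump_balanced (hB.cast rfl hq rfl) (hC.cast hq hr rfl) (hD.cast hr rfl rfl)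
  have hrun := hcost _ _ (hA.trans (((hB.trans (hC.trans hD)).mono zero_le_one).trans hE)) rfl
  have := hcost _ _ (hA.trans ((hpump.mono zero_le_one).trans hE)) rfl
  omega

theorem fst_ne_of_excursion [Fintype Q] (hstep : ∀ t < L, M.Step (γ t) (γ (t + 1)))
    (hcost : M.PathsRead (γ 0) (γ L).1 n) {a e₁ e₂ b : ℕ} (hae : a < e₁) (he : e₁ < e₂)
    (heb : e₂ < b) (hbL : b ≤ L) (ha : (γ a).2 = 0) (hb : (γ b).2 = 0)
    (hpos : ∀ t ∈ Set.Ioo a b, 1 ≤ (γ t).2) (h₁ : Fintype.card Q < (γ e₁).2)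
    (h₂ : Fintype.card Q < (γ e₂).2) (hlet : M.letters (γ e₁) (γ (e₁ + 1)) ≠ 0) :
    (γ e₁).1 ≠ (γ e₂).1 := by
  intro hq
  have hB := runLetters_ne_zero (γ := γ) he hlet
  rcases le_or_gt (γ e₁).2 (γ e₂).2 with hrise | hfall
  · obtain ⟨i, j, hi, hij, hjb, hg, -, hji⟩ := exists_map_eq_of_descent (fun t => (γ t).2)
      (fun t => (γ t).1) heb.le (fun t _ ht => (hstep t (by omega)).le_snd_add_one) (by omega)
    have := pump_runLetters_eq_zero hstep hcost he.le hi hij.le (hjb.trans hbL)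
      (fun t ht => hpos t ⟨by have := ht.1; omega, by have := ht.2; omega⟩) hq hrise hg.symm hji.le
    simp only [Nat.add_eq_zero_iff, mul_eq_zero] at this
    omega
  · obtain ⟨i, j, hi, hij, hje, hg, hai, hij'⟩ := exists_map_eq_of_ascent (fun t => (γ t).2)
      (fun t => (γ t).1) hae.le (fun t _ ht => (hstep t (by omega)).snd_le_add_one) (by omega)
    have hai' : a < i := lt_of_le_of_ne hi fun h => by subst h; omega
    have := pump_runLetters_eq_zero hstep hcost hij.le hje he.le (heb.le.trans hbL)
      (fun t ht => hpos t ⟨by have := ht.1; omega, by have := ht.2; omega⟩)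
      hg hij'.le hq.symm hfall.le
    simp only [Nat.add_eq_zero_iff, mul_eq_zero] at this
    omega

end Pumping

section Counting

variable {Q A : Type*} {M : OCA Q A} {γ : ℕ → Q × ℕ} {L n : ℕ}

def lastZero (γ : ℕ → Q × ℕ) (e : ℕ) : ℕ := Nat.findGreatest (fun i => (γ i).2 = 0) e

theorem lastZero_le (γ : ℕ → Q × ℕ) (e : ℕ) : lastZero γ e ≤ e := Nat.findGreatest_le e

theorem le_lastZero {t e : ℕ} (hte : t ≤ e) (ht : (γ t).2 = 0) : t ≤ lastZero γ e :=
  Nat.le_findGreatest hte ht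

theorem snd_lastZero (h0 : (γ 0).2 = 0) (e : ℕ) : (γ (lastZero γ e)).2 = 0 :=
  Nat.findGreatest_spec (P := fun i => (γ i).2 = 0) (Nat.zero_le e) h0

theorem card_filter_snd_le_le [Fintype Q] (hinj : Set.InjOn γ (Set.Iic L)) (m : ℕ) :
    #{e ∈ range L | (γ e).2 ≤ m} ≤ Fintype.card Q * (m + 1) := by
  have := card_le_card_of_injOn γ (t := univ ×ˢ range (m + 1))
    (fun e he => mem_product.mpr
      ⟨mem_univ _, mem_range.mpr (Nat.lt_succ_of_le (mem_filter.mp he).2)⟩)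
    (hinj.mono fun e he => Set.mem_Iic.mpr (mem_range.mp (mem_filter.mp he).1).le)
  simpa using this

theorem card_after_lastZero_le [Fintype Q] (hstep : ∀ t < L, M.Step (γ t) (γ (t + 1)))
    (hcost : M.PathsRead (γ 0) (γ L).1 n) :
    #{e ∈ range L | M.letters (γ e) (γ (e + 1)) ≠ 0 ∧ lastZero γ L < e} ≤ Fintype.card Q := by
  refine (card_le_card_of_injOn (fun e => (γ e).1) (fun _ _ => mem_univ _) ?_).trans_eq card_univ
  refine Set.injOn_of_lt_imp_ne fun e₁ he₁ e₂ he₂ h₁₂ hq => ?_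
  simp only [coe_filter, mem_range, Set.mem_ofPred_eq] at he₁ he₂
  have hpos : ∀ t ∈ Set.Ico e₁ L, 1 ≤ (γ t).2 := fun t ht =>
    Nat.one_le_iff_ne_zero.mpr fun h0 => by
      have := le_lastZero ht.2.le h0
      have := ht.1
      omega
  exact runLetters_ne_zero h₁₂ he₁.2.1
    (runLetters_eq_zero_of_pos_suffix hstep hcost h₁₂.le he₂.1.le hpos hq)

/-- The state at the last zero before a position identifies its excursion above zero, because the
configurations of the run are distinct. -/
theorem card_high_before_zero_le [Fintype Q] (hrun : M.IsAcceptingRun γ L)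
    (hinj : Set.InjOn γ (Set.Iic L)) (hcost : M.PathsRead (γ 0) (γ L).1 n) {z : ℕ}
    (hzL : z ≤ L) (hz : (γ z).2 = 0) :
    #{e ∈ range L | M.letters (γ e) (γ (e + 1)) ≠ 0 ∧ Fintype.card Q < (γ e).2 ∧ e < z} ≤
      Fintype.card Q ^ 2 := by
  refine (card_le_card_of_injOn (fun e => ((γ e).1, (γ (lastZero γ e)).1))
    (t := univ ×ˢ univ) (fun _ _ => mem_product.mpr ⟨mem_univ _, mem_univ _⟩) ?_).trans_eq
    (by simp [sq])
  refine Set.injOn_of_lt_imp_ne fun e₁ he₁ e₂ he₂ h₁₂ heq => ?_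
  simp only [coe_filter, mem_range, Set.mem_ofPred_eq] at he₁ he₂
  obtain ⟨hq, hq₀⟩ := Prod.mk.inj heq
  have hzero := snd_lastZero hrun.zero
  have hlast : lastZero γ e₁ = lastZero γ e₂ :=
    hinj (Set.mem_Iic.mpr ((lastZero_le γ e₁).trans he₁.1.le))
      (Set.mem_Iic.mpr ((lastZero_le γ e₂).trans he₂.1.le))
      (Prod.ext hq₀ ((hzero e₁).trans (hzero e₂).symm))
  have hae : lastZero γ e₁ < e₁ := lt_of_le_of_ne (lastZero_le γ e₁) fun h => by
    have := hzero e₁; rw [h] at this; omega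
  have hnext : ∃ i, e₂ ≤ i ∧ (γ i).2 = 0 := ⟨z, he₂.2.2.2.le, hz⟩
  have hb := Nat.find_spec hnext
  have hbz : Nat.find hnext ≤ z := Nat.find_min' hnext ⟨he₂.2.2.2.le, hz⟩
  have heb : e₂ < Nat.find hnext := lt_of_le_of_ne hb.1 fun h => by rw [← h] at hb; omega
  have hpos : ∀ t ∈ Set.Ioo (lastZero γ e₁) (Nat.find hnext), 1 ≤ (γ t).2 := by
    refine fun t ht => Nat.one_le_iff_ne_zero.mpr fun h0 => ?_
    rcases le_total t e₂ with hte | het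
    · have := le_lastZero hte h0
      have := ht.1
      omega
    · exact (Nat.find_min hnext ht.2) ⟨het, h0⟩
  exact fst_ne_of_excursion hrun.step hcost hae h₁₂ heb (hbz.trans hzL) (hzero e₁) hb.2 hpos
    he₁.2.2.1 he₂.2.2.1 he₁.2.1 hq

theorem runLetters_le_of_injOn [Fintype Q] (hrun : M.IsAcceptingRun γ L)
    (hinj : Set.InjOn γ (Set.Iic L)) (hcost : M.PathsRead (γ 0) (γ L).1 n) :
    M.runLetters γ 0 L ≤ 2 * Fintype.card Q * (Fintype.card Q + 1) := by
  set m := Fintype.card Q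
  set z := lastZero γ L
  have hcover : {e ∈ range L | M.letters (γ e) (γ (e + 1)) ≠ 0} ⊆
      {e ∈ range L | (γ e).2 ≤ m} ∪ {e ∈ range L | M.letters (γ e) (γ (e + 1)) ≠ 0 ∧ z < e} ∪
        {e ∈ range L | M.letters (γ e) (γ (e + 1)) ≠ 0 ∧ m < (γ e).2 ∧ e < z} := by
    intro e he
    have hz : (γ z).2 = 0 := snd_lastZero hrun.zero L
    simp only [mem_filter, mem_union, mem_range] at he ⊢
    rcases eq_or_ne e z with rfl | _ <;> omega
  calc M.runLetters γ 0 L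
      ≤ #{e ∈ range L | M.letters (γ e) (γ (e + 1)) ≠ 0} := runLetters_le_card M γ L
    _ ≤ m * (m + 1) + m + m ^ 2 :=
      (card_le_card hcover).trans <| (card_union_le _ _).trans <| add_le_add
        ((card_union_le _ _).trans (add_le_add (card_filter_snd_le_le hinj m)
          (card_after_lastZero_le hrun.step hcost)))
        (card_high_before_zero_le hrun hinj hcost (lastZero_le γ L) (snd_lastZero hrun.zero L))
    _ = 2 * m * (m + 1) := by ring

end Counting

end OCA

theorem counting_needs_sqrt_states_general (n : ℕ)
    {Q : Type*} [Fintype Q] (M : OCA Q Unit)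
    (hlang : ∀ w : List Unit, M.Accepts w ↔ w = List.replicate n ()) :
    n ≤ 14 * Fintype.card Q ^ 2 ∧
    Real.sqrt ((n : ℝ) / 14) ≤ (Fintype.card Q : ℝ) := by
  obtain ⟨L, γ, hrun, hinj⟩ := M.exists_run_injOn ((hlang _).mpr rfl)
  have hcost : M.PathsRead (γ 0) (γ L).1 n := fun y k hp hy => by
    simpa using congrArg List.length
      ((hlang _).mp (hp.accepts hrun.init hrun.zero (hy ▸ hrun.final)))
  have hn : M.runLetters γ 0 L = n :=
    hcost _ _ (OCA.path_of_run hrun.step (Nat.zero_le L) le_rfl fun _ _ => Nat.zero_le _) rfl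
  have hbound : n ≤ 14 * Fintype.card Q ^ 2 := by
    have := OCA.runLetters_le_of_injOn hrun hinj hcost
    nlinarith
  refine ⟨hbound, (Real.sqrt_le_left (Nat.cast_nonneg _)).mpr ?_⟩
  rw [div_le_iff₀ (by norm_num)]
  exact_mod_cast (by linarith : n ≤ Fintype.card Q ^ 2 * 14)

/-- Any nondeterministic one-counter automaton over the unary alphabet whose
language is exactly the singleton `{aⁿ}` satisfies `14 m² ≥ n`, where `m` is
its number of states; in particular `m ≥ √(n/14)`. -/
theorem counting_needs_sqrt_states (n : ℕ) (hn : 0 < n)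
    {Q : Type*} [Fintype Q] (M : OCA Q Unit)
    (hlang : ∀ w : List Unit, M.Accepts w ↔ w = List.replicate n ()) :
    n ≤ 14 * Fintype.card Q ^ 2 ∧
    Real.sqrt ((n : ℝ) / 14) ≤ (Fintype.card Q : ℝ) :=
  counting_needs_sqrt_states_general n M hlang
end
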